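/- arXiv:2603.14226 — 11 statements merged into one kernel-verified Lean document; each statement's English description precedes it below -/
import Mathlib

section
/- Let d ≥ 2, let δ̂ : ℝ → ℝ be continuous, differentiable, convex, and strictly increasing on [0,∞) with δ̂(0) = 0, and set δ(x,y) = δ̂(‖x − y‖) for x, y ∈ ℝ^d (Euclidean norm). Let y₁, …, yₙ ∈ ℝ^d be pairwise distinct points, let ω ∈ ℝⁿ be a weight vector and ω₀ ∈ ℝ a threshold. Define, for i ∈ {1,…,n}, the generalized Laguerre cell Cᵢ = {x ∈ ℝ^d : δ(x,yᵢ) + ωᵢ ≤ ω₀ and δ(x,yᵢ) + ωᵢ ≤ δ(x,y_k) + ω_k for all k ≠ i}, and C₀ = {x ∈ ℝ^d : ω₀ ≤ δ(x,y_k) + ω_k for all k ∈ {1,…,n}}. Then for any i, j ∈ {0,1,…,n} with i ≠ j, the intersection Cᵢ ∩ Cⱼ has d-dimensional Lebesgue measure zero. -/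
/-!
A station cell meets another station cell only on a generalized bisector
`{x | δ̂ ‖x - p‖ = δ̂ ‖x - q‖ + c}` with `p ≠ q`, and meets the residual cell only on a level set of
`x ↦ δ̂ ‖x - p‖`, which lies in a sphere. To see that the bisector is null, restrict to the lines
`y + t • (q - p)`. When `y - p` and `q - p` are independent, `t ↦ δ̂ ‖y - p + t • (q - p)‖` is
strictly convex (the triangle inequality is strict off a ray, and `δ̂` is increasing and convex), so
its increment over a step of length one is strictly increasing and the line meets the bisector at
most once. The other lines all lie on the line through `p` and `q`, which is null because `d ≥ 2`;
the disintegration of Haar measure along `q - p` concludes.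
-/

open MeasureTheory Set Module

section

variable {E : Type*} [NormedAddCommGroup E] [NormedSpace ℝ E]

theorem not_sameRay_add_smul_add_smul {u v : E} (huv : LinearIndependent ℝ ![u, v]) {t₁ t₂ : ℝ}
    (ht : t₁ ≠ t₂) : ¬SameRay ℝ (u + t₁ • v) (u + t₂ • v) := by
  intro h
  rw [sameRay_iff_norm_smul_eq] at h
  set n₁ := ‖u + t₁ • v‖
  set n₂ := ‖u + t₂ • v‖
  obtain ⟨hn, hnt⟩ := LinearIndependent.pair_iff.1 huv (n₁ - n₂) (n₁ * t₂ - n₂ * t₁)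
    (by linear_combination (norm := module) h)
  have hn₂ : n₂ = 0 := by
    rw [sub_eq_zero.1 hn] at hnt
    exact (mul_eq_zero.1 (by linear_combination hnt : n₂ * (t₂ - t₁) = 0)).resolve_right
      (sub_ne_zero.2 ht.symm)
  have hzero : (1 : ℝ) • u + t₂ • v = 0 := by simpa [n₂] using hn₂
  exact one_ne_zero (LinearIndependent.pair_iff.1 huv 1 t₂ hzero).1

theorem strictConvexOn_comp_norm_add_smul [StrictConvexSpace ℝ E] {φ : ℝ → ℝ}
    (hconv : ConvexOn ℝ (Ici 0) φ) (hmono : StrictMonoOn φ (Ici 0)) {u v : E}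
    (huv : LinearIndependent ℝ ![u, v]) : StrictConvexOn ℝ univ fun t : ℝ ↦ φ ‖u + t • v‖ := by
  refine ⟨convex_univ, fun t₁ _ t₂ _ ht a b ha hb hab ↦ ?_⟩
  have hsplit : u + (a • t₁ + b • t₂) • v = a • (u + t₁ • v) + b • (u + t₂ • v) := by
    linear_combination (norm := module) -hab • u
  have hray : ¬SameRay ℝ (a • (u + t₁ • v)) (b • (u + t₂ • v)) := fun h ↦ by
    have h' := (h.pos_smul_left (inv_pos.2 ha)).pos_smul_right (inv_pos.2 hb)
    rw [inv_smul_smul₀ ha.ne', inv_smul_smul₀ hb.ne'] at h'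
    exact not_sameRay_add_smul_add_smul huv ht h'
  have htriangle : ‖u + (a • t₁ + b • t₂) • v‖ < a * ‖u + t₁ • v‖ + b * ‖u + t₂ • v‖ := by
    rw [hsplit]
    convert norm_add_lt_of_not_sameRay hray using 2 <;>
      rw [norm_smul, Real.norm_of_nonneg (by positivity)]
  calc φ ‖u + (a • t₁ + b • t₂) • v‖
      < φ (a * ‖u + t₁ • v‖ + b * ‖u + t₂ • v‖) :=
        hmono (norm_nonneg _) (mem_Ici.2 (by positivity)) htriangle
    _ ≤ a • φ ‖u + t₁ • v‖ + b • φ ‖u + t₂ • v‖ :=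
        hconv.2 (norm_nonneg _) (norm_nonneg _) ha.le hb.le hab

theorem StrictConvexOn.strictMono_sub_comp_sub_right {g : ℝ → ℝ} (hg : StrictConvexOn ℝ univ g)
    {h : ℝ} (hh : 0 < h) : StrictMono fun t ↦ g t - g (t - h) := by
  intro t₁ t₂ ht
  have h₁ : (g t₁ - g (t₁ - h)) / h < (g t₂ - g (t₁ - h)) / (t₂ - (t₁ - h)) := by
    simpa using hg.secant_strict_mono (a := t₁ - h) trivial trivial trivial (by linarith)
      (by linarith) ht
  have h₂ : (g t₂ - g (t₁ - h)) / (t₂ - (t₁ - h)) < (g t₂ - g (t₂ - h)) / h := by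
    calc (g t₂ - g (t₁ - h)) / (t₂ - (t₁ - h))
        = (g (t₁ - h) - g t₂) / (t₁ - h - t₂) := by rw [← neg_div_neg_eq, neg_sub, neg_sub]
      _ < (g (t₂ - h) - g t₂) / (t₂ - h - t₂) :=
        hg.secant_strict_mono trivial trivial trivial (by linarith) (by linarith) (by linarith)
      _ = (g t₂ - g (t₂ - h)) / h := by rw [← neg_div_neg_eq, neg_sub, neg_sub, sub_sub_cancel]
  exact (div_lt_div_iff_of_pos_right hh).1 (h₁.trans h₂)

variable [FiniteDimensional ℝ E] [MeasurableSpace E] [BorelSpace E] (μ : Measure E)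
  [μ.IsAddHaarMeasure]

theorem ae_linearIndependent_sub_pair (hE : 2 ≤ finrank ℝ E) (p : E) {v : E} (hv : v ≠ 0) :
    ∀ᵐ y ∂μ, LinearIndependent ℝ ![y - p, v] := by
  have hline : AffineSubspace.mk' p (ℝ ∙ v) ≠ ⊤ := fun h ↦ by
    have hspan : (ℝ ∙ v) = ⊤ := by
      rw [← AffineSubspace.direction_mk' p (ℝ ∙ v), h, AffineSubspace.direction_top]
    have := finrank_span_singleton (K := ℝ) hv
    rw [hspan, finrank_top] at this
    omega
  refine measure_mono_null (fun y hy ↦ ?_) (Measure.addHaar_affineSubspace μ _ hline)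
  obtain ⟨a, ha⟩ := not_forall_not.1 fun h ↦ hy (linearIndependent_fin2.2 ⟨hv, h⟩)
  exact AffineSubspace.mem_mk'.2 (Submodule.mem_span_singleton.2 ⟨a, ha⟩)

theorem measure_levelSet_comp_norm_sub_eq_zero [Nontrivial E] {φ : ℝ → ℝ}
    (hmono : StrictMonoOn φ (Ici 0)) (p : E) (c : ℝ) : μ {x | φ ‖x - p‖ = c} = 0 := by
  rcases eq_empty_or_nonempty {x | φ ‖x - p‖ = c} with h | ⟨x₀, hx₀⟩
  · rw [h, measure_empty]
  refine measure_mono_null (fun x hx ↦ ?_) (Measure.addHaar_sphere μ p ‖x₀ - p‖)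
  exact mem_sphere_iff_norm.2 (hmono.injOn (norm_nonneg _) (norm_nonneg _) (hx.trans hx₀.symm))

theorem measure_bisector_eq_zero [StrictConvexSpace ℝ E] (hE : 2 ≤ finrank ℝ E) {φ : ℝ → ℝ}
    (hcont : Continuous φ) (hconv : ConvexOn ℝ (Ici 0) φ) (hmono : StrictMonoOn φ (Ici 0))
    {p q : E} (hpq : p ≠ q) (c : ℝ) : μ {x | φ ‖x - p‖ = φ ‖x - q‖ + c} = 0 := by
  set B := {x : E | φ ‖x - p‖ = φ ‖x - q‖ + c}
  set v := q - p
  have hB : MeasurableSet B := (isClosed_eq (by fun_prop) (by fun_prop)).measurableSet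
  have hfiber (y : E) (hy : LinearIndependent ℝ ![y - p, v]) :
      {t : ℝ | y + t • v ∈ B}.Subsingleton := by
    have hshift (t : ℝ) : y + t • v ∈ B ↔ φ ‖y - p + t • v‖ - φ ‖y - p + (t - 1) • v‖ = c := by
      rw [mem_ofPred_eq, show y + t • v - p = y - p + t • v by abel,
        show y + t • v - q = y - p + (t - 1) • v by simp only [v, sub_smul, one_smul]; abel]
      constructor <;> intro h <;> linarith
    intro t₁ h₁ t₂ h₂
    refine ((strictConvexOn_comp_norm_add_smul hconv hmono hy).strictMono_sub_comp_sub_right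
      one_pos).injective ?_
    exact ((hshift t₁).1 h₁).trans ((hshift t₂).1 h₂).symm
  refine measure_eq_zero_iff_ae_notMem.2 <|
    (ae_ae_add_linearMap_mem_iff (LinearMap.toSpanSingleton ℝ E v) volume μ hB.compl).1 ?_
  filter_upwards [ae_linearIndependent_sub_pair μ hE p (sub_ne_zero.2 hpq.symm)] with y hy
  exact measure_eq_zero_iff_ae_notMem.1 ((hfiber y hy).measure_zero volume)

end

theorem laguerre_cells_null_intersection_general
    (d n : ℕ) (hd : 2 ≤ d)
    (δhat : ℝ → ℝ)
    (hcont : Continuous δhat)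
    (hconv : ConvexOn ℝ Set.univ δhat)
    (hmono : ∀ u v : ℝ, 0 ≤ u → u < v → δhat u < δhat v)
    (y : Fin n → EuclideanSpace ℝ (Fin d))
    (hy : Function.Injective y)
    (ω : Fin n → ℝ) (ω₀ : ℝ)
    (C : Option (Fin n) → Set (EuclideanSpace ℝ (Fin d)))
    (hC : ∀ i : Fin n, C (some i) =
      {x | δhat (‖x - y i‖) + ω i ≤ ω₀ ∧
        ∀ k : Fin n, k ≠ i → δhat (‖x - y i‖) + ω i ≤ δhat (‖x - y k‖) + ω k})
    (hC0 : C none = {x | ∀ k : Fin n, ω₀ ≤ δhat (‖x - y k‖) + ω k}) :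
    ∀ i j : Option (Fin n), i ≠ j → volume (C i ∩ C j) = 0 := by
  have hE : 2 ≤ finrank ℝ (EuclideanSpace ℝ (Fin d)) := by rwa [finrank_euclideanSpace_fin]
  have : Nontrivial (EuclideanSpace ℝ (Fin d)) := nontrivial_of_finrank_pos (R := ℝ) (by omega)
  have hconv' : ConvexOn ℝ (Ici 0) δhat := hconv.subset (subset_univ _) (convex_Ici 0)
  have hmono' : StrictMonoOn δhat (Ici 0) := fun u hu v _ huv ↦ hmono u v hu huv
  have hstations (i j : Fin n) (hij : i ≠ j) : volume (C (some i) ∩ C (some j)) = 0 := by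
    refine measure_mono_null (fun x ⟨hxi, hxj⟩ ↦ ?_)
      (measure_bisector_eq_zero volume hE hcont hconv' hmono' (hy.ne hij) (ω j - ω i))
    rw [hC] at hxi hxj
    rw [mem_ofPred_eq]
    linarith [hxi.2 j hij.symm, hxj.2 i hij]
  have hresidual (i : Fin n) : volume (C (some i) ∩ C none) = 0 := by
    refine measure_mono_null (fun x ⟨hxi, hx0⟩ ↦ ?_)
      (measure_levelSet_comp_norm_sub_eq_zero volume hmono' (y i) (ω₀ - ω i))
    rw [hC] at hxi
    rw [hC0] at hx0
    rw [mem_ofPred_eq]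
    linarith [hxi.1, hx0 i]
  rintro (_ | i) (_ | j) hij
  · exact absurd rfl hij
  · exact inter_comm (C none) _ ▸ hresidual j
  · exact hresidual i
  · exact hstations i j (mt (congrArg some) hij)

/-- Generalized Laguerre cells have null pairwise intersections. The cell indexed by
`some i` is the cell of station `i`; the cell indexed by `none` is the residual
"no-match" region `C₀`. -/
theorem laguerre_cells_null_intersection
    (d n : ℕ) (hd : 2 ≤ d)
    (δhat : ℝ → ℝ)
    (hcont : Continuous δhat)
    (hdiff : Differentiable ℝ δhat)
    (hconv : ConvexOn ℝ Set.univ δhat)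
    (hmono : ∀ u v : ℝ, 0 ≤ u → u < v → δhat u < δhat v)
    (hzero : δhat 0 = 0)
    (y : Fin n → EuclideanSpace ℝ (Fin d))
    (hy : Function.Injective y)
    (ω : Fin n → ℝ) (ω₀ : ℝ)
    (C : Option (Fin n) → Set (EuclideanSpace ℝ (Fin d)))
    (hC : ∀ i : Fin n, C (some i) =
      {x | δhat (‖x - y i‖) + ω i ≤ ω₀ ∧
        ∀ k : Fin n, k ≠ i → δhat (‖x - y i‖) + ω i ≤ δhat (‖x - y k‖) + ω k})
    (hC0 : C none = {x | ∀ k : Fin n, ω₀ ≤ δhat (‖x - y k‖) + ω k}) :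
    ∀ i j : Option (Fin n), i ≠ j → volume (C i ∩ C j) = 0 :=
  laguerre_cells_null_intersection_general d n hd δhat hcont hconv hmono y hy ω ω₀ C hC hC0
end

section
/- Let a > 0 and let δ̂ : ℝ → ℝ be convex and strictly increasing on [0,∞). Then the function h : ℝ → ℝ defined by h(ξ) = δ̂(√(a² + ξ²)) is strictly convex on ℝ. -/
/-!
`√(a² + ξ²) = ‖a + ξ i‖` is the norm along the line `a + ℝ i` in `ℂ`, which misses the origin,
so no two of its points lie on a common ray and the strict triangle inequality makes
`ξ ↦ √(a² + ξ²)` strictly convex. Composing with `δ̂`, which is convex and strictly increasing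
on the range `[|a|, ∞)`, keeps the convexity strict.
-/

open Set

theorem strictConvexOn_norm_add_smul {E : Type*} [NormedAddCommGroup E] [NormedSpace ℝ E]
    [StrictConvexSpace ℝ E] {u v : E} (huv : LinearIndependent ℝ ![u, v]) :
    StrictConvexOn ℝ univ fun x : ℝ => ‖u + x • v‖ := by
  have hindep := LinearIndependent.pair_iff.1 huv
  have hne (x : ℝ) : u + x • v ≠ 0 := fun h => one_ne_zero (hindep 1 x (by simpa using h)).1
  have hnotRay {x y : ℝ} (hxy : x ≠ y) {s t : ℝ} (hs : 0 < s) :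
      s • (u + x • v) ≠ t • (u + y • v) := by
    intro h
    obtain ⟨hst, hsxy⟩ := hindep (s - t) (s * x - t * y) (by linear_combination (norm := module) h)
    rw [sub_eq_zero] at hst
    subst hst
    exact hxy (mul_left_cancel₀ hs.ne' (sub_eq_zero.1 hsxy))
  refine ⟨convex_univ, fun x _ y _ hxy p q hp hq hpq => ?_⟩
  have hray : ¬SameRay ℝ (p • (u + x • v)) (q • (u + y • v)) := fun h => by
    obtain ⟨r₁, r₂, hr₁, -, h⟩ :=
      h.exists_pos (smul_ne_zero hp.ne' (hne x)) (smul_ne_zero hq.ne' (hne y))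
    rw [smul_smul, smul_smul] at h
    exact hnotRay hxy (mul_pos hr₁ hp) h
  calc ‖u + (p • x + q • y) • v‖ = ‖p • (u + x • v) + q • (u + y • v)‖ := by
        congr 1; linear_combination (norm := module) -(hpq • u)
    _ < ‖p • (u + x • v)‖ + ‖q • (u + y • v)‖ := norm_add_lt_of_not_sameRay hray
    _ = p • ‖u + x • v‖ + q • ‖u + y • v‖ := by
        simp only [norm_smul, Real.norm_of_nonneg hp.le, Real.norm_of_nonneg hq.le, smul_eq_mul]

theorem strictConvexOn_sqrt_sq_add_sq {a : ℝ} (ha : a ≠ 0) :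
    StrictConvexOn ℝ univ fun x : ℝ => √(a ^ 2 + x ^ 2) := by
  have hindep : LinearIndependent ℝ ![(a : ℂ), Complex.I] := by
    refine LinearIndependent.pair_iff.2 fun s t h => ⟨?_, ?_⟩
    · simpa [ha] using congrArg Complex.re h
    · simpa using congrArg Complex.im h
  simpa [Complex.real_smul, Complex.norm_add_mul_I] using strictConvexOn_norm_add_smul hindep

/-- If `δ̂` is convex and strictly increasing on `[0,∞)` and `a > 0`, then
`ξ ↦ δ̂(√(a² + ξ²))` is strictly convex on `ℝ`. -/
theorem strictConvexOn_comp_sqrt_sq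
    (a : ℝ) (ha : 0 < a) (δhat : ℝ → ℝ)
    (hconv : ConvexOn ℝ Set.univ δhat)
    (hmono : ∀ u v : ℝ, 0 ≤ u → u < v → δhat u < δhat v) :
    StrictConvexOn ℝ Set.univ (fun ξ : ℝ => δhat (Real.sqrt (a ^ 2 + ξ ^ 2))) := by
  set r : ℝ → ℝ := fun ξ => √(a ^ 2 + ξ ^ 2)
  have hr : Continuous r := by fun_prop
  have hrange : Convex ℝ (r '' univ) := by
    rw [image_univ]; exact (isPreconnected_range hr).ordConnected.convex
  have hmonoOn : StrictMonoOn δhat (r '' univ) := by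
    rintro _ ⟨x, -, rfl⟩ _ - hlt
    exact hmono _ _ (Real.sqrt_nonneg _) hlt
  exact (hconv.subset (subset_univ _) hrange).comp_strictConvexOn
    (strictConvexOn_sqrt_sq_add_sq ha.ne') hmonoOn
end

section
/- Let a > 0 and let δ̂ : ℝ → ℝ be convex, differentiable, and strictly increasing on [0,∞). Then the function q : ℝ → ℝ defined by q(ξ) = δ̂(√(a² + ξ²)) − δ̂(√(a² + (ξ−1)²)) is strictly increasing on ℝ; consequently, for every real constant c the level set {ξ ∈ ℝ : q(ξ) = c} contains at most one point. -/
private lemma sqrt_combo_lt (a : ℝ) (ha : 0 < a) {x y θ τ : ℝ} (hxy : x ≠ y)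
    (hθ : 0 < θ) (hτ : 0 < τ) (hsum : θ + τ = 1) :
    Real.sqrt (a ^ 2 + (θ * x + τ * y) ^ 2) <
      θ * Real.sqrt (a ^ 2 + x ^ 2) + τ * Real.sqrt (a ^ 2 + y ^ 2) := by
  set r := Real.sqrt (a ^ 2 + x ^ 2) with hr
  set s := Real.sqrt (a ^ 2 + y ^ 2) with hs
  have hr2 : r ^ 2 = a ^ 2 + x ^ 2 := Real.sq_sqrt (by positivity)
  have hs2 : s ^ 2 = a ^ 2 + y ^ 2 := Real.sq_sqrt (by positivity)
  have hrpos : 0 < r := by rw [hr]; positivity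
  have hspos : 0 < s := by rw [hs]; positivity
  have hkey : a ^ 2 + x * y < r * s := by
    have h1 : (r * s) ^ 2 - (a ^ 2 + x * y) ^ 2 = a ^ 2 * (x - y) ^ 2 := by
      have : (r * s) ^ 2 = (a ^ 2 + x ^ 2) * (a ^ 2 + y ^ 2) := by
        rw [mul_pow, hr2, hs2]
      rw [this]; ring
    have hxy' : x - y ≠ 0 := sub_ne_zero.mpr hxy
    have hne : (x - y) ^ 2 > 0 := by positivity
    nlinarith [mul_pos hrpos hspos, mul_pos (mul_pos ha ha) hne, mul_pos hrpos hspos]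
  rw [show Real.sqrt (a ^ 2 + (θ * x + τ * y) ^ 2) < θ * r + τ * s ↔
      a ^ 2 + (θ * x + τ * y) ^ 2 < (θ * r + τ * s) ^ 2 from
    Real.sqrt_lt' (by positivity)]
  have hθτ : 0 < θ * τ := mul_pos hθ hτ
  have hsq : (θ + τ) ^ 2 = 1 := by rw [hsum]; ring
  have key2 : (θ * r + τ * s) ^ 2 - (a ^ 2 + (θ * x + τ * y) ^ 2) =
      2 * (θ * τ) * (r * s - (a ^ 2 + x * y)) := by
    linear_combination θ ^ 2 * hr2 + τ ^ 2 * hs2 + a ^ 2 * hsq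
  linarith [mul_pos hθτ (sub_pos.mpr hkey)]

/-- If `δ̂` is convex, differentiable, and strictly increasing on `[0,∞)` and `a > 0`, then
`q(ξ) = δ̂(√(a² + ξ²)) − δ̂(√(a² + (ξ−1)²))` is strictly increasing, and hence every level
set of `q` contains at most one point. -/
theorem strictMono_laguerre_boundary_fn
    (a : ℝ) (ha : 0 < a) (δhat : ℝ → ℝ)
    (hconv : ConvexOn ℝ Set.univ δhat)
    (hdiff : Differentiable ℝ δhat)
    (hmono : ∀ u v : ℝ, 0 ≤ u → u < v → δhat u < δhat v) :
    StrictMono (fun ξ : ℝ =>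
      δhat (Real.sqrt (a ^ 2 + ξ ^ 2)) - δhat (Real.sqrt (a ^ 2 + (ξ - 1) ^ 2))) ∧
    ∀ c : ℝ, Set.Subsingleton {ξ : ℝ |
      δhat (Real.sqrt (a ^ 2 + ξ ^ 2)) - δhat (Real.sqrt (a ^ 2 + (ξ - 1) ^ 2)) = c} := by
  set g : ℝ → ℝ := fun t => δhat (Real.sqrt (a ^ 2 + t ^ 2)) with hg
  have hgconv : StrictConvexOn ℝ Set.univ g := by
    refine ⟨convex_univ, fun x _ y _ hxy θ τ hθ hτ hsum => ?_⟩
    have h1 : Real.sqrt (a ^ 2 + (θ * x + τ * y) ^ 2) <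
        θ * Real.sqrt (a ^ 2 + x ^ 2) + τ * Real.sqrt (a ^ 2 + y ^ 2) :=
      sqrt_combo_lt a ha hxy hθ hτ hsum
    calc g (θ • x + τ • y) = δhat (Real.sqrt (a ^ 2 + (θ * x + τ * y) ^ 2)) := rfl
      _ < δhat (θ * Real.sqrt (a ^ 2 + x ^ 2) + τ * Real.sqrt (a ^ 2 + y ^ 2)) :=
          hmono _ _ (Real.sqrt_nonneg _) h1
      _ ≤ θ * g x + τ * g y :=
          hconv.2 (Set.mem_univ _) (Set.mem_univ _) hθ.le hτ.le hsum
  have hmonoQ : StrictMono (fun ξ : ℝ => g ξ - g (ξ - 1)) := by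
    intro ξ η hlt
    have h1 : (g ξ - g (ξ - 1)) / (ξ - (ξ - 1)) < (g η - g (ξ - 1)) / (η - (ξ - 1)) :=
      hgconv.secant_strict_mono (Set.mem_univ (ξ - 1)) (Set.mem_univ ξ) (Set.mem_univ η)
        (by linarith) (by linarith) hlt
    have h2 : (g (ξ - 1) - g η) / ((ξ - 1) - η) < (g (η - 1) - g η) / ((η - 1) - η) :=
      hgconv.secant_strict_mono (Set.mem_univ η) (Set.mem_univ (ξ - 1)) (Set.mem_univ (η - 1))
        (by linarith) (by linarith) (by linarith)
    have e1 : (g ξ - g (ξ - 1)) / (ξ - (ξ - 1)) = g ξ - g (ξ - 1) := by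
      rw [show ξ - (ξ - 1) = 1 by ring, div_one]
    have e2 : (g (η - 1) - g η) / ((η - 1) - η) = g η - g (η - 1) := by
      rw [show (η - 1) - η = -1 by ring]; ring
    have e3 : (g η - g (ξ - 1)) / (η - (ξ - 1)) = (g (ξ - 1) - g η) / ((ξ - 1) - η) := by
      rw [← neg_div_neg_eq]; ring_nf
    rw [e1, e3] at h1
    rw [e2] at h2
    simpa using lt_trans h1 h2
  exact ⟨hmonoQ, fun c x hx y hy => hmonoQ.injective (by
    simpa using hx.trans hy.symm)⟩
end

section
/- Let n, m ≥ 1, let r ∈ ℝ, let d : {1,…,n} → ℝ, let ℓⱼ : ℝ → ℝ for j ∈ {1,…,m}, and let η ∈ ℝ^{n×m}. Define the price pᵢ(t) = max(0, max_{j'∈[m]} (η_{ij'} − ℓ_{j'}(t))) and the net utility Uⱼ(i,t) = r − d(i) − ℓⱼ(t) − pᵢ(t). (a) Suppose i ∈ [n], j ∈ [m] and t ∈ ℝ satisfy: d(i) + η_{ij} ≤ r; d(i) + η_{ij} ≤ d(i') + η_{i'j} for all i' ∈ [n]; ℓⱼ(t) ≤ η_{ij}; and η_{ij} − ℓⱼ(t)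 ≥ η_{ij'} − ℓ_{j'}(t) for all j' ∈ [m]. Then Uⱼ(i,t) ≥ 0 and Uⱼ(i,t) ≥ Uⱼ(i',t') for every i' ∈ [n] and every t' ∈ ℝ. (b) Suppose instead that j ∈ [m] satisfies r ≤ d(i') + η_{i'j} for all i' ∈ [n]. Then Uⱼ(i',t') ≤ 0 for every i' ∈ [n] and every t' ∈ ℝ. -/
/-- Envy-freeness and individual rationality of the time-dependent pricing
`pᵢ(t) = (max_{j'} (η_{ij'} − ℓ_{j'}(t)))⁺` with net utility
`Uⱼ(i,t) = r − d(i) − ℓⱼ(t) − pᵢ(t)`. -/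
theorem envy_free_pricing
    (n m : ℕ) (hm : 0 < m)
    (r : ℝ) (d : Fin n → ℝ) (ℓ : Fin m → ℝ → ℝ)
    (η : Fin n → Fin m → ℝ)
    (p : Fin n → ℝ → ℝ)
    (hp : ∀ i t, p i t = max 0 (⨆ j' : Fin m, (η i j' - ℓ j' t)))
    (U : Fin m → Fin n → ℝ → ℝ)
    (hU : ∀ j i t, U j i t = r - d i - ℓ j t - p i t) :
    (∀ (i : Fin n) (j : Fin m) (t : ℝ),
      d i + η i j ≤ r →
      (∀ i' : Fin n, d i + η i j ≤ d i' + η i' j) →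
      ℓ j t ≤ η i j →
      (∀ j' : Fin m, η i j' - ℓ j' t ≤ η i j - ℓ j t) →
      0 ≤ U j i t ∧ ∀ (i' : Fin n) (t' : ℝ), U j i' t' ≤ U j i t) ∧
    (∀ j : Fin m, (∀ i' : Fin n, r ≤ d i' + η i' j) →
      ∀ (i' : Fin n) (t' : ℝ), U j i' t' ≤ 0) := by
  have hbdd : ∀ (i : Fin n) (t : ℝ), BddAbove (Set.range fun j' : Fin m => η i j' - ℓ j' t) :=
    fun i t => Set.Finite.bddAbove (Set.finite_range _)
  haveI : Nonempty (Fin m) := ⟨⟨0, hm⟩⟩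
  have hple : ∀ (i : Fin n) (j : Fin m) (t : ℝ), η i j - ℓ j t ≤ p i t := by
    intro i j t
    rw [hp]
    exact le_max_of_le_right (le_ciSup (hbdd i t) j)
  constructor
  · intro i j t h1 h2 h3 h4
    have hpeq : p i t = η i j - ℓ j t := by
      rw [hp]
      have hs : (⨆ j' : Fin m, (η i j' - ℓ j' t)) = η i j - ℓ j t :=
        le_antisymm (ciSup_le h4) (le_ciSup (hbdd i t) j)
      rw [hs, max_eq_right (by linarith)]
    constructor
    · rw [hU, hpeq]; linarith
    · intro i' t'
      have := hple i' j t'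
      have := h2 i'
      rw [hU, hU, hpeq]; linarith
  · intro j hj i' t'
    have := hple i' j t'
    have := hj i'
    rw [hU]; linarith
end

section
/- Let m ≥ 1, let b, h, c > 0, let s₁ ≥ s₂ ≥ … ≥ s_m > 0 and set s_{m+1} = 0. Let q₁, …, q_m ≥ 0 and put Qⱼ = Σ_{k=1}^{j} q_k. Let u₀, u₁, …, u_m and v₀, v₁, …, v_m be real numbers with u₀ = v₀ = 0 and uⱼ − vⱼ = Qⱼ/c for each j ∈ {1,…,m}. Then (c/2)·Σ_{j=1}^m sⱼ·( h·(uⱼ² − u_{j−1}²) + b·(vⱼ² − v_{j−1}²) ) ≥ Σ_{j=1}^m (β·Qⱼ²/(4c))·(sⱼ − s_{j+1}), where β = 2bh/(b+h); moreover equality holds for the choice uⱼ = b·Qⱼ/(c·(b+h)) and vⱼ = −h·Qⱼ/(c·(b+h)) for all j. -/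
/-- Abel summation for sums over `Icc 1 m`. -/
lemma abel_icc (m : ℕ) (s f : ℕ → ℝ) (hf0 : f 0 = 0) :
    ∑ j ∈ Finset.Icc 1 m, s j * (f j - f (j - 1))
      = (∑ j ∈ Finset.Icc 1 m, (s j - s (j + 1)) * f j) + s (m + 1) * f m := by
  induction m with
  | zero => simp [hf0]
  | succ n ih =>
      rw [Finset.sum_Icc_succ_top (by omega), Finset.sum_Icc_succ_top (by omega), ih]
      simp only [Nat.add_sub_cancel]
      ring

lemma key_ineq (b h u v d : ℝ) (hb : 0 < b) (hh : 0 < h) (hd : u - v = d) :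
    b * h / (b + h) * d ^ 2 ≤ h * u ^ 2 + b * v ^ 2 := by
  have hbh : 0 < b + h := by linarith
  rw [div_mul_eq_mul_div, div_le_iff₀ hbh, ← hd]
  nlinarith [sq_nonneg (h * u + b * v)]

/-- Closed-form minimal temporal cost under two-piece linear costs: any feasible schedule
breakpoints `u, v` give total temporal cost at least `Σⱼ (β Qⱼ²/(4c)) (sⱼ − s_{j+1})`,
and the canonical choice attains equality. -/
theorem two_piece_linear_scheduling_bound
    (m : ℕ) (hm : 1 ≤ m) (b h c : ℝ) (hb : 0 < b) (hh : 0 < h) (hc : 0 < c)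
    (s : ℕ → ℝ)
    (hsmono : ∀ j, 1 ≤ j → j < m → s (j + 1) ≤ s j)
    (hslast : 0 < s m) (hszero : s (m + 1) = 0)
    (q : ℕ → ℝ) (hq : ∀ j ∈ Finset.Icc 1 m, 0 ≤ q j)
    (Q : ℕ → ℝ) (hQ : ∀ j, Q j = ∑ k ∈ Finset.Icc 1 j, q k)
    (β : ℝ) (hβ : β = 2 * b * h / (b + h)) :
    (∀ u v : ℕ → ℝ, u 0 = 0 → v 0 = 0 →
      (∀ j ∈ Finset.Icc 1 m, u j - v j = Q j / c) →
      (∑ j ∈ Finset.Icc 1 m, β * (Q j) ^ 2 / (4 * c) * (s j - s (j + 1))) ≤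
        (c / 2) * ∑ j ∈ Finset.Icc 1 m,
          s j * (h * ((u j) ^ 2 - (u (j - 1)) ^ 2) + b * ((v j) ^ 2 - (v (j - 1)) ^ 2))) ∧
    ((c / 2) * ∑ j ∈ Finset.Icc 1 m,
        s j * (h * ((b * Q j / (c * (b + h))) ^ 2 - (b * Q (j - 1) / (c * (b + h))) ^ 2)
          + b * ((-(h * Q j / (c * (b + h)))) ^ 2 - (-(h * Q (j - 1) / (c * (b + h)))) ^ 2))
      = ∑ j ∈ Finset.Icc 1 m, β * (Q j) ^ 2 / (4 * c) * (s j - s (j + 1))) := by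
  have hbh : 0 < b + h := by linarith
  have hQ0 : Q 0 = 0 := by simp [hQ]
  have hss : ∀ j ∈ Finset.Icc 1 m, 0 ≤ s j - s (j + 1) := by
    intro j hj
    simp only [Finset.mem_Icc] at hj
    rcases eq_or_lt_of_le hj.2 with rfl | hlt
    · rw [hszero]; linarith
    · have := hsmono j hj.1 hlt; linarith
  constructor
  · intro u v hu0 hv0 huv
    set f : ℕ → ℝ := fun j => h * (u j) ^ 2 + b * (v j) ^ 2 with hf
    have hf0 : f 0 = 0 := by simp [hf, hu0, hv0]
    have hrw : ∑ j ∈ Finset.Icc 1 m,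
        s j * (h * ((u j) ^ 2 - (u (j - 1)) ^ 2) + b * ((v j) ^ 2 - (v (j - 1)) ^ 2))
        = ∑ j ∈ Finset.Icc 1 m, (s j - s (j + 1)) * f j := by
      have := abel_icc m s f hf0
      rw [hszero] at this
      simp only [zero_mul, add_zero] at this
      rw [← this]
      exact Finset.sum_congr rfl (fun j hj => by simp only [hf]; ring)
    rw [hrw, Finset.mul_sum]
    refine Finset.sum_le_sum fun j hj => ?_
    have hd := huv j hj
    have hfj : b * h / (b + h) * (Q j / c) ^ 2 ≤ f j := key_ineq b h (u j) (v j) _ hb hh hd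
    have h1 : β * (Q j) ^ 2 / (4 * c) * (s j - s (j + 1))
        = c / 2 * ((s j - s (j + 1)) * (b * h / (b + h) * (Q j / c) ^ 2)) := by
      rw [hβ]; field_simp; ring
    rw [h1]
    have := hss j hj
    have h2 : (s j - s (j + 1)) * (b * h / (b + h) * (Q j / c) ^ 2)
        ≤ (s j - s (j + 1)) * f j := by
      exact mul_le_mul_of_nonneg_left hfj this
    nlinarith [h2]
  · set f : ℕ → ℝ := fun j => h * (b * Q j / (c * (b + h))) ^ 2
      + b * (-(h * Q j / (c * (b + h)))) ^ 2 with hf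
    have hf0 : f 0 = 0 := by simp [hf, hQ0]
    have hrw : ∑ j ∈ Finset.Icc 1 m,
        s j * (h * ((b * Q j / (c * (b + h))) ^ 2 - (b * Q (j - 1) / (c * (b + h))) ^ 2)
          + b * ((-(h * Q j / (c * (b + h)))) ^ 2 - (-(h * Q (j - 1) / (c * (b + h)))) ^ 2))
        = ∑ j ∈ Finset.Icc 1 m, (s j - s (j + 1)) * f j := by
      have := abel_icc m s f hf0
      rw [hszero] at this
      simp only [zero_mul, add_zero] at this
      rw [← this]
      exact Finset.sum_congr rfl (fun j hj => by simp only [hf]; ring)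
    rw [hrw, Finset.mul_sum]
    refine Finset.sum_congr rfl fun j hj => ?_
    simp only [hf]
    rw [hβ]
    field_simp
    ring
end

section
/- Let r, w, c₁, c₂ > 0 and define g(x₁, x₂) = (x₁ + x₂)·r − x₁²/2 − x₂²/2 − w·x₁²/(2c₁) − w·x₂²/(2c₂) on the set K = {(x₁,x₂) ∈ ℝ² : x₁ ≥ 0, x₂ ≥ 0, x₁ + x₂ ≤ 1}. Suppose r < (w + c₁)(w + c₂) / (2c₁c₂ + (c₁ + c₂)w). Then the point (x₁*, x₂*) = (r·c₁/(c₁ + w), r·c₂/(c₂ + w)) belongs to K and satisfies g(x₁, x₂) ≤ g(x₁*, x₂*) for every (x₁, x₂) ∈ K, and the maximal value is g(x₁*, x₂*) = c₁·r²/(2(c₁ + w)) + c₂·r²/(2(c₂ + w)). -/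
/-- Hotelling model with homogeneous sensitivity, partial-service regime: the interior
point `(rc₁/(c₁+w), rc₂/(c₂+w))` is feasible, maximizes the welfare `g` over `K`, and the
maximal welfare equals `c₁r²/(2(c₁+w)) + c₂r²/(2(c₂+w))`. -/
theorem hotelling_homogeneous_partial_service
    (r w c₁ c₂ : ℝ) (hr : 0 < r) (hw : 0 < w) (hc₁ : 0 < c₁) (hc₂ : 0 < c₂)
    (g : ℝ → ℝ → ℝ)
    (hg : ∀ x₁ x₂, g x₁ x₂ =
      (x₁ + x₂) * r - x₁ ^ 2 / 2 - x₂ ^ 2 / 2 - w * x₁ ^ 2 / (2 * c₁) - w * x₂ ^ 2 / (2 * c₂))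
    (hrlt : r < (w + c₁) * (w + c₂) / (2 * c₁ * c₂ + (c₁ + c₂) * w)) :
    (0 ≤ r * c₁ / (c₁ + w) ∧ 0 ≤ r * c₂ / (c₂ + w) ∧
      r * c₁ / (c₁ + w) + r * c₂ / (c₂ + w) ≤ 1) ∧
    (∀ x₁ x₂ : ℝ, 0 ≤ x₁ → 0 ≤ x₂ → x₁ + x₂ ≤ 1 →
      g x₁ x₂ ≤ g (r * c₁ / (c₁ + w)) (r * c₂ / (c₂ + w))) ∧
    g (r * c₁ / (c₁ + w)) (r * c₂ / (c₂ + w)) =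
      c₁ * r ^ 2 / (2 * (c₁ + w)) + c₂ * r ^ 2 / (2 * (c₂ + w)) := by
  have h1 : 0 < c₁ + w := by linarith
  have h2 : 0 < c₂ + w := by linarith
  have hD : 0 < 2 * c₁ * c₂ + (c₁ + c₂) * w := by positivity
  have hsum : r * c₁ / (c₁ + w) + r * c₂ / (c₂ + w) ≤ 1 := by
    rw [div_add_div _ _ (ne_of_gt h1) (ne_of_gt h2), div_le_one (by positivity)]
    have := (lt_div_iff₀ hD).mp hrlt
    nlinarith
  refine ⟨⟨by positivity, by positivity, hsum⟩, ?_, ?_⟩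
  · intro x₁ x₂ _ _ _
    have k1 : 0 ≤ (c₁ + w) / (2 * c₁) * (x₁ - r * c₁ / (c₁ + w)) ^ 2 := by positivity
    have k2 : 0 ≤ (c₂ + w) / (2 * c₂) * (x₂ - r * c₂ / (c₂ + w)) ^ 2 := by positivity
    have key : g (r * c₁ / (c₁ + w)) (r * c₂ / (c₂ + w)) - g x₁ x₂ =
        (c₁ + w) / (2 * c₁) * (x₁ - r * c₁ / (c₁ + w)) ^ 2 +
        (c₂ + w) / (2 * c₂) * (x₂ - r * c₂ / (c₂ + w)) ^ 2 := by
      rw [hg, hg]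
      field_simp
      ring
    linarith
  · rw [hg]
    field_simp
    ring
end

section
/- Let r, w, c₁, c₂ > 0 and define g(x₁, x₂) = (x₁ + x₂)·r − x₁²/2 − x₂²/2 − w·x₁²/(2c₁) − w·x₂²/(2c₂) on the set K = {(x₁,x₂) ∈ ℝ² : x₁ ≥ 0, x₂ ≥ 0, x₁ + x₂ ≤ 1}. Suppose r ≥ (w + c₁)(w + c₂) / (2c₁c₂ + (c₁ + c₂)w). Then the point (x₁*, 1 − x₁*) with x₁* = (c₁c₂ + c₁w)/(2c₁c₂ + (c₁ + c₂)w) belongs to K and satisfies g(x₁, x₂) ≤ g(x₁*, 1 − x₁*) for every (x₁, x₂) ∈ K, and the maximal value is g(x₁*, 1 − x₁*) = r − (c₂ + w)(c₁ + w)/(2(2c₁c₂ + (c₁ + c₂)w)). -/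
set_option maxHeartbeats 1000000


/-- Hotelling model with homogeneous sensitivity, complete-service regime: the boundary
point `(x₁*, 1 − x₁*)` with `x₁* = (c₁c₂ + c₁w)/(2c₁c₂ + (c₁+c₂)w)` is feasible,
maximizes the welfare `g` over `K`, and the maximal welfare equals
`r − (c₂+w)(c₁+w)/(2(2c₁c₂ + (c₁+c₂)w))`. -/
theorem hotelling_homogeneous_complete_service
    (r w c₁ c₂ : ℝ) (hr : 0 < r) (hw : 0 < w) (hc₁ : 0 < c₁) (hc₂ : 0 < c₂)
    (g : ℝ → ℝ → ℝ)
    (hg : ∀ x₁ x₂, g x₁ x₂ =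
      (x₁ + x₂) * r - x₁ ^ 2 / 2 - x₂ ^ 2 / 2 - w * x₁ ^ 2 / (2 * c₁) - w * x₂ ^ 2 / (2 * c₂))
    (hrge : (w + c₁) * (w + c₂) / (2 * c₁ * c₂ + (c₁ + c₂) * w) ≤ r) :
    (0 ≤ (c₁ * c₂ + c₁ * w) / (2 * c₁ * c₂ + (c₁ + c₂) * w) ∧
      0 ≤ 1 - (c₁ * c₂ + c₁ * w) / (2 * c₁ * c₂ + (c₁ + c₂) * w) ∧
      (c₁ * c₂ + c₁ * w) / (2 * c₁ * c₂ + (c₁ + c₂) * w)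
        + (1 - (c₁ * c₂ + c₁ * w) / (2 * c₁ * c₂ + (c₁ + c₂) * w)) ≤ 1) ∧
    (∀ x₁ x₂ : ℝ, 0 ≤ x₁ → 0 ≤ x₂ → x₁ + x₂ ≤ 1 →
      g x₁ x₂ ≤ g ((c₁ * c₂ + c₁ * w) / (2 * c₁ * c₂ + (c₁ + c₂) * w))
        (1 - (c₁ * c₂ + c₁ * w) / (2 * c₁ * c₂ + (c₁ + c₂) * w))) ∧
    g ((c₁ * c₂ + c₁ * w) / (2 * c₁ * c₂ + (c₁ + c₂) * w))
        (1 - (c₁ * c₂ + c₁ * w) / (2 * c₁ * c₂ + (c₁ + c₂) * w)) =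
      r - (c₂ + w) * (c₁ + w) / (2 * (2 * c₁ * c₂ + (c₁ + c₂) * w)) := by
  have hD : 0 < 2 * c₁ * c₂ + (c₁ + c₂) * w := by positivity
  set D := 2 * c₁ * c₂ + (c₁ + c₂) * w with hDdef
  set A := (c₁ * c₂ + c₁ * w) / D with hAdef
  have hA0 : 0 ≤ A := by positivity
  have hA1 : A ≤ 1 := by
    rw [hAdef, div_le_one hD]
    nlinarith
  have hDne : D ≠ 0 := ne_of_gt hD
  refine ⟨⟨hA0, by linarith, by linarith⟩, ?_, ?_⟩
  · intro x₁ x₂ hx₁ hx₂ hsum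
    rw [hg, hg, ← sub_nonneg]
    have hlam' : 0 ≤ r * D - (w + c₁) * (w + c₂) := by
      rw [div_le_iff₀ hD] at hrge; linarith
    have expand :
        ((A + (1 - A)) * r - A ^ 2 / 2 - (1 - A) ^ 2 / 2 - w * A ^ 2 / (2 * c₁)
            - w * (1 - A) ^ 2 / (2 * c₂))
          - ((x₁ + x₂) * r - x₁ ^ 2 / 2 - x₂ ^ 2 / 2 - w * x₁ ^ 2 / (2 * c₁)
            - w * x₂ ^ 2 / (2 * c₂))
        = ((1 - x₁ - x₂) * (r * D - (w + c₁) * (w + c₂)) * (2 * c₁ * c₂)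
            + D * ((c₁ + w) * c₂ * (x₁ - A) ^ 2 + (c₂ + w) * c₁ * (x₂ - (1 - A)) ^ 2))
          / (2 * c₁ * c₂ * D) := by
      rw [hAdef, hDdef]
      field_simp
      ring
    rw [expand]
    apply div_nonneg _ (by positivity)
    have h3 : 0 ≤ (1 - x₁ - x₂) * (r * D - (w + c₁) * (w + c₂)) := by
      apply mul_nonneg (by linarith) hlam'
    have h4 : 0 ≤ (c₁ + w) * c₂ * (x₁ - A) ^ 2 + (c₂ + w) * c₁ * (x₂ - (1 - A)) ^ 2 := by
      positivity
    nlinarith [mul_nonneg hD.le h4, mul_nonneg h3 (by positivity : (0:ℝ) ≤ 2 * c₁ * c₂)]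
  · rw [hg, hAdef, hDdef]
    field_simp
    ring
end

section
/- Let h : ℝ → ℝ be square-integrable on [0,1] with respect to Lebesgue measure. Then ∫₀¹ ( ∫_α¹ h(t) dt )² dα ≤ (1/2) · ∫₀¹ h(t)² dt. -/
/-!
By Cauchy–Schwarz (here Jensen's inequality for `x ↦ x ^ 2`), `(∫_α^1 h)^2 ≤ (1 - α) ∫_α^1 h^2`,
which is at most `(1 - α) ∫_0^1 h^2`; integrating in `α` over `[0, 1]` gives the factor
`∫_0^1 (1 - α) dα = 1/2`. The same argument on `[a, b]` gives the factor `(b - a)^2 / 2`.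
-/

open MeasureTheory

theorem sq_integral_le_measureReal_mul_integral_sq {α : Type*} [MeasurableSpace α]
    {μ : Measure α} [IsFiniteMeasure μ] {f : α → ℝ} (hf : MemLp f 2 μ) :
    (∫ x, f x ∂μ) ^ 2 ≤ μ.real Set.univ * ∫ x, f x ^ 2 ∂μ := by
  rcases eq_zero_or_neZero μ with rfl | _
  · simp
  have hμ : 0 < μ.real Set.univ := measureReal_univ_pos
  have jensen : (⨍ x, f x ∂μ) ^ 2 ≤ ⨍ x, f x ^ 2 ∂μ :=
    (even_two.convexOn_pow (𝕜 := ℝ)).map_average_le (continuous_pow 2).continuousOn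
      isClosed_univ (.of_forall fun _ ↦ Set.mem_univ _) (hf.integrable one_le_two) hf.integrable_sq
  rw [average_eq, average_eq, smul_eq_mul, smul_eq_mul, mul_pow] at jensen
  have scaled := mul_le_mul_of_nonneg_left jensen (sq_nonneg (μ.real Set.univ))
  field_simp at scaled
  linarith

theorem sq_intervalIntegral_le_mul_intervalIntegral_sq {a b : ℝ} (hab : a ≤ b) {f : ℝ → ℝ}
    (hf : MemLp f 2 (volume.restrict (Set.Ioc a b))) :
    (∫ x in a..b, f x) ^ 2 ≤ (b - a) * ∫ x in a..b, f x ^ 2 := by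
  have : IsFiniteMeasure (volume.restrict (Set.Ioc a b)) := by
    rw [isFiniteMeasure_restrict]; exact measure_Ioc_lt_top.ne
  simpa [intervalIntegral.integral_of_le hab, hab] using
    sq_integral_le_measureReal_mul_integral_sq hf

theorem integral_sq_intervalIntegral_le {a b : ℝ} (hab : a ≤ b) {h : ℝ → ℝ}
    (hh : MemLp h 2 (volume.restrict (Set.Icc a b))) :
    ∫ α in a..b, (∫ t in α..b, h t) ^ 2 ≤ (b - a) ^ 2 / 2 * ∫ t in a..b, h t ^ 2 := by
  have hh_int : IntegrableOn h (Set.uIcc a b) := by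
    rw [Set.uIcc_of_le hab]; exact hh.integrable one_le_two
  have hsq_int : IntervalIntegrable (fun t ↦ h t ^ 2) volume a b :=
    (intervalIntegrable_iff_integrableOn_Icc_of_le hab).2 hh.integrable_sq
  have pointwise : ∀ α ∈ Set.Icc a b,
      (∫ t in α..b, h t) ^ 2 ≤ (b - α) * ∫ t in a..b, h t ^ 2 := fun α ⟨haα, hαb⟩ ↦ calc
    (∫ t in α..b, h t) ^ 2 ≤ (b - α) * ∫ t in α..b, h t ^ 2 :=
      sq_intervalIntegral_le_mul_intervalIntegral_sq hαb
        (hh.mono_measure (Measure.restrict_mono (Set.Ioc_subset_Icc_self.trans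
          (Set.Icc_subset_Icc_left haα)) le_rfl))
    _ ≤ (b - α) * ∫ t in a..b, h t ^ 2 := by
      gcongr
      exact intervalIntegral.integral_mono_interval haα hαb le_rfl
        (.of_forall fun _ ↦ sq_nonneg _) hsq_int
  have hlhs_int : IntervalIntegrable (fun α ↦ (∫ t in α..b, h t) ^ 2) volume a b :=
    ((intervalIntegral.continuousOn_primitive_interval_left hh_int).pow 2).intervalIntegrable
  calc ∫ α in a..b, (∫ t in α..b, h t) ^ 2
      ≤ ∫ α in a..b, (b - α) * ∫ t in a..b, h t ^ 2 :=
        intervalIntegral.integral_mono_on hab hlhs_int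
          ((by fun_prop : Continuous fun α ↦ (b - α) * ∫ t in a..b, h t ^ 2).intervalIntegrable a b)
          pointwise
    _ = (b - a) ^ 2 / 2 * ∫ t in a..b, h t ^ 2 := by
        rw [intervalIntegral.integral_mul_const,
          intervalIntegral.integral_sub intervalIntegrable_const intervalIntegral.intervalIntegrable_id]
        simp only [intervalIntegral.integral_const, integral_id, smul_eq_mul]
        ring

/-- Cauchy–Schwarz/Fubini tail bound: `∫₀¹ (∫_α¹ h)² dα ≤ (1/2) ∫₀¹ h²`. -/
theorem tail_integral_sq_bound
    (h : ℝ → ℝ)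
    (hmem : MemLp h 2 (volume.restrict (Set.Icc (0 : ℝ) 1))) :
    (∫ α in (0 : ℝ)..1, (∫ t in α..1, h t) ^ 2) ≤ (1 / 2) * ∫ t in (0 : ℝ)..1, (h t) ^ 2 := by
  simpa using integral_sq_intervalIntegral_le zero_le_one hmem
end

section
/- Let r > 0 and w, c > 0, and for a square-integrable function f : ℝ → ℝ on [0,1] define J(f) = ∫₀¹ ( r·f(α) − f(α)²/2 − (w/(2c))·( ∫_α¹ f(t) dt )² ) dα. Let f*(α) = r · cosh((1−α)·√(w/c)) / cosh(√(w/c)). Then f* maximizes J over all square-integrable functions: J(f) ≤ J(f*) for every square-integrable f : ℝ → ℝ on [0,1]. -/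
open MeasureTheory Set
open scoped ENNReal

/-!
Write `f = f* + g`, `G α = ∫_α^1 g` and `κ = w / (2c)`. Expanding the square,
`J f = J f* + L g - ∫ (g² / 2 + κ G²)` with `L g = ∫ (g (r - f*) - 2κ F* G)`, `F* α = ∫_α^1 f*`.
The profile `f*` solves the Euler–Lagrange equation `f*' = -2κ F*` with `f* 0 = r`, so
integrating `f*' G` by parts (`G` is merely absolutely continuous) gives `L g = 0`.
-/

theorem AbsolutelyContinuousOnInterval.integral_deriv_mul_integral_tail {φ g : ℝ → ℝ} {a b : ℝ}
    (hφ : AbsolutelyContinuousOnInterval φ a b) (hg : IntervalIntegrable g volume a b) :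
    ∫ x in a..b, deriv φ x * ∫ t in x..b, g t =
      (∫ x in a..b, φ x * g x) - φ a * ∫ x in a..b, g x := by
  set G : ℝ → ℝ := fun x => ∫ t in x..b, g t
  have hG_eq : G = -fun x => ∫ t in b..x, g t := funext fun x => intervalIntegral.integral_symm b x
  have hG : AbsolutelyContinuousOnInterval G a b :=
    hG_eq ▸ (hg.absolutelyContinuousOnInterval_intervalIntegral right_mem_uIcc).neg
  have hderivG : ∀ᵐ x, x ∈ uIoc a b → deriv G x = -g x := by
    filter_upwards [hg.ae_hasDerivAt_integral] with x hx hxab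
    exact hG_eq ▸ (hx (uIoc_subset_uIcc hxab) b right_mem_uIcc).neg.deriv
  have hparts := hφ.integral_deriv_mul_eq_sub hG
  rw [intervalIntegral.integral_congr_ae (hderivG.mono fun x hx hxab => by rw [hx hxab])] at hparts
  simp only [mul_neg, ← sub_eq_add_neg] at hparts
  rw [intervalIntegral.integral_sub (hφ.intervalIntegrable_deriv.mul_continuousOn hG.continuousOn)
      (hg.continuousOn_mul hφ.continuousOn)] at hparts
  simp only [G, intervalIntegral.integral_same, mul_zero, zero_sub] at hparts
  linarith

theorem ContinuousOn.memLp_restrict_Icc {f : ℝ → ℝ} {a b : ℝ} (hf : ContinuousOn f (Icc a b))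
    (p : ℝ≥0∞) : MemLp f p (volume.restrict (Icc a b)) := by
  obtain ⟨C, hC⟩ := isCompact_Icc.exists_bound_of_continuousOn hf
  exact .of_bound (hf.aestronglyMeasurable measurableSet_Icc) C
    ((ae_restrict_mem measurableSet_Icc).mono hC)

noncomputable def hotellingWelfare (r κ : ℝ) (f : ℝ → ℝ) : ℝ :=
  ∫ α in (0 : ℝ)..1, (r * f α - f α ^ 2 / 2 - κ * (∫ t in α..1, f t) ^ 2)

def SolvesHotellingEulerLagrange (r κ : ℝ) (φ : ℝ → ℝ) : Prop :=
  AbsolutelyContinuousOnInterval φ 0 1 ∧ φ 0 = r ∧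
    ∀ x ∈ Icc (0 : ℝ) 1, deriv φ x = -(2 * κ) * ∫ t in x..1, φ t

namespace SolvesHotellingEulerLagrange

variable {r κ : ℝ} {φ : ℝ → ℝ}

theorem integral_firstVariation_eq_zero (hφ : SolvesHotellingEulerLagrange r κ φ) {g : ℝ → ℝ}
    (hg : IntervalIntegrable g volume 0 1) :
    ∫ α in (0 : ℝ)..1,
      (g α * (r - φ α) - 2 * κ * (∫ t in α..1, φ t) * ∫ t in α..1, g t) = 0 := by
  obtain ⟨hφac, hφ0, hEL⟩ := hφ
  have hG : ContinuousOn (fun x => ∫ t in x..1, g t) (uIcc 0 1) :=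
    intervalIntegral.continuousOn_primitive_interval_left ((intervalIntegrable_iff').mp hg)
  rw [intervalIntegral.integral_congr (g := fun α => r * g α - φ α * g α +
      deriv φ α * ∫ t in α..1, g t) fun α hα => by
        simp only [hEL α (by rwa [uIcc_of_le zero_le_one] at hα)]; ring,
    intervalIntegral.integral_add ((hg.const_mul r).sub (hg.continuousOn_mul hφac.continuousOn))
      (hφac.intervalIntegrable_deriv.mul_continuousOn hG),
    intervalIntegral.integral_sub (hg.const_mul r) (hg.continuousOn_mul hφac.continuousOn),
    hφac.integral_deriv_mul_integral_tail hg, intervalIntegral.integral_const_mul, hφ0]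
  ring

theorem hotellingWelfare_eq_sub (hφ : SolvesHotellingEulerLagrange r κ φ) {f : ℝ → ℝ}
    (hf : MemLp f 2 (volume.restrict (Icc 0 1))) :
    hotellingWelfare r κ f = hotellingWelfare r κ φ -
      ∫ α in (0 : ℝ)..1, ((f α - φ α) ^ 2 / 2 + κ * (∫ t in α..1, (f t - φ t)) ^ 2) := by
  have hI : uIcc (0 : ℝ) 1 = Icc 0 1 := uIcc_of_le zero_le_one
  have hφc : ContinuousOn φ (uIcc 0 1) := hφ.1.continuousOn
  set g : ℝ → ℝ := fun x => f x - φ x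
  have hg : MemLp g 2 (volume.restrict (Icc 0 1)) := hf.sub ((hI ▸ hφc).memLp_restrict_Icc 2)
  have hfi : IntervalIntegrable f volume 0 1 :=
    (intervalIntegrable_iff_integrableOn_Icc_of_le zero_le_one).mpr (hf.integrable one_le_two)
  have hgi : IntervalIntegrable g volume 0 1 :=
    (intervalIntegrable_iff_integrableOn_Icc_of_le zero_le_one).mpr (hg.integrable one_le_two)
  have hΦ : ContinuousOn (fun x => ∫ t in x..1, φ t) (uIcc 0 1) :=
    intervalIntegral.continuousOn_primitive_interval_left ((intervalIntegrable_iff').mp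
      hφc.intervalIntegrable)
  have hG : ContinuousOn (fun x => ∫ t in x..1, g t) (uIcc 0 1) :=
    intervalIntegral.continuousOn_primitive_interval_left ((intervalIntegrable_iff').mp hgi)
  have hsplit : EqOn (fun α => r * f α - f α ^ 2 / 2 - κ * (∫ t in α..1, f t) ^ 2)
      (fun α => (r * φ α - φ α ^ 2 / 2 - κ * (∫ t in α..1, φ t) ^ 2) +
        (g α * (r - φ α) - 2 * κ * (∫ t in α..1, φ t) * ∫ t in α..1, g t) -
        (g α ^ 2 / 2 + κ * (∫ t in α..1, g t) ^ 2)) (uIcc 0 1) := by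
    intro α hα
    have hsub : uIcc α 1 ⊆ uIcc 0 1 := uIcc_subset_uIcc hα right_mem_uIcc
    have htail : ∫ t in α..1, g t = (∫ t in α..1, f t) - ∫ t in α..1, φ t :=
      intervalIntegral.integral_sub (hfi.mono_set hsub) (hφc.intervalIntegrable.mono_set hsub)
    simp only [htail, g]
    ring
  have IA : IntervalIntegrable (fun α => r * φ α - φ α ^ 2 / 2 - κ * (∫ t in α..1, φ t) ^ 2)
      volume 0 1 := ContinuousOn.intervalIntegrable (by fun_prop)
  have IB : IntervalIntegrable
      (fun α => g α * (r - φ α) - 2 * κ * (∫ t in α..1, φ t) * ∫ t in α..1, g t) volume 0 1 :=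
    (hgi.mul_continuousOn (continuousOn_const.sub hφc)).sub
      (ContinuousOn.intervalIntegrable (by fun_prop))
  have IC : IntervalIntegrable (fun α => g α ^ 2 / 2 + κ * (∫ t in α..1, g t) ^ 2) volume 0 1 :=
    (((intervalIntegrable_iff_integrableOn_Icc_of_le zero_le_one).mpr hg.integrable_sq).div_const
      2).add (ContinuousOn.intervalIntegrable (by fun_prop))
  rw [hotellingWelfare, intervalIntegral.integral_congr hsplit,
    intervalIntegral.integral_sub (IA.add IB) IC, intervalIntegral.integral_add IA IB,
    hφ.integral_firstVariation_eq_zero hgi, add_zero]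
  rfl

theorem hotellingWelfare_le (hφ : SolvesHotellingEulerLagrange r κ φ) (hκ : 0 ≤ κ) {f : ℝ → ℝ}
    (hf : MemLp f 2 (volume.restrict (Icc 0 1))) :
    hotellingWelfare r κ f ≤ hotellingWelfare r κ φ := by
  rw [hφ.hotellingWelfare_eq_sub hf, sub_le_self_iff]
  exact intervalIntegral.integral_nonneg zero_le_one fun α _ => by positivity

end SolvesHotellingEulerLagrange

noncomputable def coshProfile (r l α : ℝ) : ℝ := r * Real.cosh ((1 - α) * l) / Real.cosh l

theorem contDiff_coshProfile (r l : ℝ) : ContDiff ℝ 1 (coshProfile r l) := by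
  unfold coshProfile
  fun_prop

theorem hasDerivAt_coshProfile (r l α : ℝ) :
    HasDerivAt (coshProfile r l) (-(r * l) * Real.sinh ((1 - α) * l) / Real.cosh l) α := by
  have := (((hasDerivAt_id' α).const_sub 1).mul_const l).cosh.const_mul r |>.div_const (Real.cosh l)
  exact this.congr_deriv (by ring)

theorem integral_coshProfile {l : ℝ} (hl : l ≠ 0) (r α : ℝ) :
    ∫ t in α..1, coshProfile r l t = r * Real.sinh ((1 - α) * l) / (l * Real.cosh l) := by
  have hprim (t : ℝ) : HasDerivAt (fun t => -(r * Real.sinh ((1 - t) * l)) / (l * Real.cosh l))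
      (coshProfile r l t) t := by
    have := ((((hasDerivAt_id' t).const_sub 1).mul_const l).sinh.const_mul r).neg.div_const
      (l * Real.cosh l)
    exact this.congr_deriv (by unfold coshProfile; field_simp)
  rw [intervalIntegral.integral_eq_sub_of_hasDerivAt (fun t _ => hprim t)
    ((contDiff_coshProfile r l).continuous.intervalIntegrable _ _)]
  simp only [sub_self, zero_mul, Real.sinh_zero, mul_zero, neg_zero, zero_div, zero_sub]
  ring

theorem solvesHotellingEulerLagrange_coshProfile {r k : ℝ} (hk : 0 < k) :
    SolvesHotellingEulerLagrange r (k / 2) (coshProfile r (Real.sqrt k)) := by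
  have hl : Real.sqrt k ≠ 0 := (Real.sqrt_pos.mpr hk).ne'
  refine ⟨(contDiff_coshProfile _ _).contDiffOn.absolutelyContinuousOnInterval, ?_, ?_⟩
  · simp [coshProfile, (Real.cosh_pos _).ne']
  · intro x _
    rw [(hasDerivAt_coshProfile _ _ x).deriv, integral_coshProfile hl]
    field_simp
    rw [Real.sq_sqrt hk.le]
    ring

theorem hotelling_unconstrained_maximizer_general
    (r w c : ℝ) (hw : 0 < w) (hc : 0 < c)
    (J : (ℝ → ℝ) → ℝ)
    (hJ : ∀ f : ℝ → ℝ, J f = ∫ α in (0 : ℝ)..1,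
      (r * f α - (f α) ^ 2 / 2 - (w / (2 * c)) * (∫ t in α..1, f t) ^ 2))
    (fstar : ℝ → ℝ)
    (hfstar : ∀ α, fstar α =
      r * Real.cosh ((1 - α) * Real.sqrt (w / c)) / Real.cosh (Real.sqrt (w / c))) :
    ∀ f : ℝ → ℝ, MemLp f 2 (volume.restrict (Set.Icc (0 : ℝ) 1)) → J f ≤ J fstar := by
  intro f hf
  obtain rfl : J = hotellingWelfare r (w / (2 * c)) := funext hJ
  obtain rfl : fstar = coshProfile r (Real.sqrt (w / c)) := funext hfstar
  rw [show w / (2 * c) = w / c / 2 by ring]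
  exact (solvesHotellingEulerLagrange_coshProfile (div_pos hw hc)).hotellingWelfare_le
    (by positivity) hf

/-- The hyperbolic-cosine profile `f*(α) = r cosh((1−α)√(w/c)) / cosh(√(w/c))` maximizes
the unconstrained Hotelling station welfare `J` over square-integrable functions. -/
theorem hotelling_unconstrained_maximizer
    (r w c : ℝ) (hr : 0 < r) (hw : 0 < w) (hc : 0 < c)
    (J : (ℝ → ℝ) → ℝ)
    (hJ : ∀ f : ℝ → ℝ, J f = ∫ α in (0 : ℝ)..1,
      (r * f α - (f α) ^ 2 / 2 - (w / (2 * c)) * (∫ t in α..1, f t) ^ 2))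
    (fstar : ℝ → ℝ)
    (hfstar : ∀ α, fstar α =
      r * Real.cosh ((1 - α) * Real.sqrt (w / c)) / Real.cosh (Real.sqrt (w / c))) :
    ∀ f : ℝ → ℝ, MemLp f 2 (volume.restrict (Set.Icc (0 : ℝ) 1)) → J f ≤ J fstar :=
  hotelling_unconstrained_maximizer_general r w c hw hc J hJ fstar hfstar
end

section
/- Let r > 0 and w, c > 0, and define f*(α) = r · cosh((1−α)·√(w/c)) / cosh(√(w/c)) for α ∈ [0,1]. Then for every α ∈ [0,1], r − f*(α) = (w/c) · ∫₀^α ( ∫_t¹ f*(u) du ) dt. -/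
/-!
With `k = √(w/c)` the profile `φ(α) = cosh((1 - α) k)` satisfies `φ'' = k² φ` with `φ'(1) = 0`,
so integrating twice, from `1` and then from `0`, gives
`cosh k - φ(α) = k² ∫₀^α ∫_t¹ φ`. The boundary `f*` is `φ` scaled by `r / cosh k`, and `k² = w/c`.
-/

open Real intervalIntegral

theorem mul_integral_cosh_sub_mul (a k s t : ℝ) :
    k * ∫ u in s..t, cosh ((a - u) * k) = sinh ((a - s) * k) - sinh ((a - t) * k) := by
  have hderiv (u : ℝ) :
      HasDerivAt (fun u => sinh ((a - u) * k)) (-(k * cosh ((a - u) * k))) u := by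
    convert (((hasDerivAt_id' u).const_sub a).mul_const k).sinh using 1
    ring
  have hcont : Continuous fun u => k * cosh ((a - u) * k) := by fun_prop
  rw [← integral_const_mul, ← neg_sub, ← integral_eq_sub_of_hasDerivAt (fun u _ => hderiv u)
    (hcont.neg.intervalIntegrable s t), integral_neg, neg_neg]

theorem mul_integral_sinh_sub_mul (a k s t : ℝ) :
    k * ∫ u in s..t, sinh ((a - u) * k) = cosh ((a - s) * k) - cosh ((a - t) * k) := by
  have hderiv (u : ℝ) :
      HasDerivAt (fun u => cosh ((a - u) * k)) (-(k * sinh ((a - u) * k))) u := by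
    convert (((hasDerivAt_id' u).const_sub a).mul_const k).cosh using 1
    ring
  have hcont : Continuous fun u => k * sinh ((a - u) * k) := by fun_prop
  rw [← integral_const_mul, ← neg_sub, ← integral_eq_sub_of_hasDerivAt (fun u _ => hderiv u)
    (hcont.neg.intervalIntegrable s t), integral_neg, neg_neg]

theorem cosh_sub_cosh_one_sub_mul_eq (k α : ℝ) :
    cosh k - cosh ((1 - α) * k) = k ^ 2 * ∫ t in (0 : ℝ)..α, ∫ u in t..1, cosh ((1 - u) * k) :=
  calc cosh k - cosh ((1 - α) * k)
      = k * ∫ t in (0 : ℝ)..α, sinh ((1 - t) * k) := by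
        rw [mul_integral_sinh_sub_mul, sub_zero, one_mul]
    _ = k * ∫ t in (0 : ℝ)..α, k * ∫ u in t..1, cosh ((1 - u) * k) := by
        simp only [mul_integral_cosh_sub_mul, sub_self, zero_mul, sinh_zero, sub_zero]
    _ = k ^ 2 * ∫ t in (0 : ℝ)..α, ∫ u in t..1, cosh ((1 - u) * k) := by
        rw [integral_const_mul, ← mul_assoc, sq]

theorem hotelling_boundary_stationarity_general
    (r w c : ℝ) (hw : 0 < w) (hc : 0 < c)
    (fstar : ℝ → ℝ)
    (hfstar : ∀ α, fstar α =
      r * Real.cosh ((1 - α) * Real.sqrt (w / c)) / Real.cosh (Real.sqrt (w / c))) :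
    ∀ α ∈ Set.Icc (0 : ℝ) 1,
      r - fstar α = (w / c) * ∫ t in (0 : ℝ)..α, (∫ u in t..1, fstar u) := by
  intro α _
  set k := √(w / c)
  have hwc : w / c = k ^ 2 := (sq_sqrt (div_pos hw hc).le).symm
  have hfstar' : fstar = fun u => r / cosh k * cosh ((1 - u) * k) := by
    funext u
    rw [hfstar, div_mul_eq_mul_div, mul_div_right_comm]
  have hcosh : cosh k ≠ 0 := (cosh_pos k).ne'
  simp only [hfstar', integral_const_mul, hwc]
  calc r - r / cosh k * cosh ((1 - α) * k)
      = r / cosh k * (cosh k - cosh ((1 - α) * k)) := by field_simp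
    _ = _ := by rw [cosh_sub_cosh_one_sub_mul_eq]; ring

/-- Euler–Lagrange stationarity identity for the optimal Hotelling boundary
`f*(α) = r cosh((1−α)√(w/c)) / cosh(√(w/c))`:
`r − f*(α) = (w/c) ∫₀^α (∫_t¹ f*(u) du) dt` for all `α ∈ [0,1]`. -/
theorem hotelling_boundary_stationarity
    (r w c : ℝ) (hr : 0 < r) (hw : 0 < w) (hc : 0 < c)
    (fstar : ℝ → ℝ)
    (hfstar : ∀ α, fstar α =
      r * Real.cosh ((1 - α) * Real.sqrt (w / c)) / Real.cosh (Real.sqrt (w / c))) :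
    ∀ α ∈ Set.Icc (0 : ℝ) 1,
      r - fstar α = (w / c) * ∫ t in (0 : ℝ)..α, (∫ u in t..1, fstar u) :=
  hotelling_boundary_stationarity_general r w c hw hc fstar hfstar
end

section
/- Let c₀, c₁, c₂, w > 0. Define the dispersion cost D = (c₂ + w)(c₁ + w)/(2(2c₁c₂ + (c₁ + c₂)w)) and the concentration cost C = 1/2 + w/(2(c₁ + c₂ + c₀)). Then: (i) C < D if and only if c₁c₂(c₁ + c₂ + c₀) + 2w·c₁c₂ − w²·c₀ < 0; (ii) if c₁c₂ ≥ w², then D < C (dispersion is strictly better) for every c₀ > 0; (iii) if c₁c₂ < w², then C < D if and only if c₀ > (c₁c₂(c₁ + c₂) + 2w·c₁c₂)/(w² − c₁c₂). -/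
/-- Dispersion vs. concentration in the Hotelling model: comparison of the dispersion
cost `D` and the concentration cost `C`. -/
theorem dispersion_vs_concentration
    (c₀ c₁ c₂ w : ℝ) (h0 : 0 < c₀) (h1 : 0 < c₁) (h2 : 0 < c₂) (hw : 0 < w)
    (D C : ℝ)
    (hD : D = (c₂ + w) * (c₁ + w) / (2 * (2 * c₁ * c₂ + (c₁ + c₂) * w)))
    (hC : C = 1 / 2 + w / (2 * (c₁ + c₂ + c₀))) :
    (C < D ↔ c₁ * c₂ * (c₁ + c₂ + c₀) + 2 * w * (c₁ * c₂) - w ^ 2 * c₀ < 0) ∧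
    (w ^ 2 ≤ c₁ * c₂ → D < C) ∧
    (c₁ * c₂ < w ^ 2 →
      (C < D ↔ (c₁ * c₂ * (c₁ + c₂) + 2 * w * (c₁ * c₂)) / (w ^ 2 - c₁ * c₂) < c₀)) := by
  have hA : (0:ℝ) < 2 * (2 * c₁ * c₂ + (c₁ + c₂) * w) := by positivity
  have hB : (0:ℝ) < 2 * (c₁ + c₂ + c₀) := by positivity
  have hCeq : C = ((c₁ + c₂ + c₀) + w) / (2 * (c₁ + c₂ + c₀)) := by
    rw [hC]; field_simp
  have key : C < D ↔ c₁ * c₂ * (c₁ + c₂ + c₀) + 2 * w * (c₁ * c₂) - w ^ 2 * c₀ < 0 := by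
    rw [hD, hCeq, div_lt_div_iff₀ hB hA]
    constructor <;> intro h <;> nlinarith [h, hB, hA]
  refine ⟨key, ?_, ?_⟩
  · intro hle
    rw [hD, hCeq, div_lt_div_iff₀ hA hB]
    nlinarith [mul_pos h1 h2, mul_pos hw h0]
  · intro hlt
    rw [key, div_lt_iff₀ (by linarith : (0:ℝ) < w ^ 2 - c₁ * c₂)]
    constructor <;> intro h <;> nlinarith [h]
end
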